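/- (Conditional-on-baseline identifiability) Under consistency, temporal ordering, SRA, and positivity, for every t with s-1 ≤ t ≤ K, every regimen ā(t-s+1,t), and every value v of V(t-s+1) with positive probability: E[ Y_{ā(t-s+1,t)}(t+1) | V(t-s+1)=v ] = E[ 1{Ā(t-s+1,t)=ā(t-s+1,t)} Y(t+1) / ∏_{j=t-s+1}^{t} g(A(j)|Ā(j-1),L̄(j)) | V(t-s+1)=v ]. -/

import Mathlib

open Finset
open scoped Classical

noncomputable section

def pr {Ω : Type} [Fintype Ω] (μ : Ω → ℝ) (E : Ω → Prop) : ℝ :=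
  ∑ ω, if E ω then μ ω else 0

def cpr {Ω : Type} [Fintype Ω] (μ : Ω → ℝ) (E F : Ω → Prop) : ℝ :=
  pr μ (fun ω => E ω ∧ F ω) / pr μ F

def ex {Ω : Type} [Fintype Ω] (μ : Ω → ℝ) (f : Ω → ℝ) : ℝ :=
  ∑ ω, f ω * μ ω

def cex {Ω : Type} [Fintype Ω] (μ : Ω → ℝ) (f : Ω → ℝ) (F : Ω → Prop) : ℝ :=
  (∑ ω, if F ω then f ω * μ ω else 0) / pr μ F

/-!
Write `W_j` for the inverse-probability weight of the treatments at times `m ≤ i < j`, where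
`m = t + 1 - s`. On every cell `{H_j = h, X = x}` of the observed history
`H_j = (Ā(j-1), L̄(j))` and the counterfactuals `X = (L_ā(k))_{ā,k}`, sequential randomization
gives the event `{A(j) = ā(j)}` the mass `g_j(h) · P(H_j = h, X = x)`, and positivity lets the
weight `1 / g_j` undo this factor. Hence `E[f W_j] = E[f W_{j+1}]` for every `f` depending only on
`(H_j, X)`. Start from `f = 1{V = v} Y_ā(t+1)`, a function of `(H_m, X)`, with `W_m = 1`, and
stop at `j = t + 1`: there consistency and temporal ordering turn `Y_ā(t+1)` into the observed `Y(t+1)` on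
the support of `W_{t+1}`. Both conditional expectations have the denominator `P(V = v)`.
-/

section FiniteProbability

variable {Ω : Type} [Fintype Ω] (μ : Ω → ℝ)

lemma pr_congr {E F : Ω → Prop} (h : ∀ ω, E ω ↔ F ω) : pr μ E = pr μ F :=
  sum_congr rfl fun ω _ => if_congr (h ω) rfl rfl

lemma cpr_congr {E E' F F' : Ω → Prop} (hE : ∀ ω, E ω ↔ E' ω) (hF : ∀ ω, F ω ↔ F' ω) :
    cpr μ E F = cpr μ E' F' := by
  rw [cpr, cpr, pr_congr μ fun ω => and_congr (hE ω) (hF ω), pr_congr μ hF]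

lemma pr_pos_of_pos (hμ : ∀ ω, 0 ≤ μ ω) {E : Ω → Prop} {ω₀ : Ω} (hE : E ω₀) (h₀ : 0 < μ ω₀) :
    0 < pr μ E :=
  sum_pos' (fun ω _ => by split_ifs <;> simp [hμ ω]) ⟨ω₀, mem_univ ω₀, by simpa [hE]⟩

lemma cex_eq_ex_div (f : Ω → ℝ) (F : Ω → Prop) :
    cex μ f F = ex μ (fun ω => if F ω then f ω else 0) / pr μ F := by
  simp only [cex, ex, ite_mul, zero_mul]

lemma ex_ite_eq_mul_pr {F G : Ω → Prop} {f : Ω → ℝ} {c : ℝ}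
    (h : ∀ ω, F ω → f ω = if G ω then c else 0) :
    ex μ (fun ω => if F ω then f ω else 0) = c * pr μ (fun ω => F ω ∧ G ω) := by
  rw [ex, pr, mul_sum]
  refine sum_congr rfl fun ω _ => ?_
  by_cases hF : F ω
  · by_cases hG : G ω <;> simp [h ω hF, hF, hG]
  · simp [hF]

lemma pr_and_eq_cpr_mul_pr {E D F : Ω → Prop} (hF : pr μ F ≠ 0)
    (hind : cpr μ (fun ω => E ω ∧ D ω) F = cpr μ E F * cpr μ D F) :
    pr μ (fun ω => (E ω ∧ D ω) ∧ F ω) = cpr μ E F * pr μ (fun ω => D ω ∧ F ω) := by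
  rwa [cpr.eq_1 μ (fun ω => E ω ∧ D ω), cpr.eq_1 μ D, mul_div_assoc', div_left_inj' hF] at hind

lemma ex_eq_sum_image_fiber {γ : Type} (κ : Ω → γ) (f : Ω → ℝ) :
    ex μ f = ∑ k ∈ univ.image κ, ex μ (fun ω => if κ ω = k then f ω else 0) := by
  rw [ex, ← sum_fiberwise_of_maps_to fun ω _ => mem_image_of_mem κ (mem_univ ω)]
  simp only [ex, ite_mul, zero_mul, sum_filter]

lemma ex_eq_ex_of_fiberwise {γ : Type} (κ : Ω → γ) {f g : Ω → ℝ}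
    (h : ∀ ω₀, μ ω₀ ≠ 0 → ex μ (fun ω => if κ ω = κ ω₀ then f ω else 0) =
      ex μ (fun ω => if κ ω = κ ω₀ then g ω else 0)) :
    ex μ f = ex μ g := by
  rw [ex_eq_sum_image_fiber μ κ f, ex_eq_sum_image_fiber μ κ g]
  refine sum_congr rfl fun k _ => ?_
  by_cases hk : ∃ ω₀, κ ω₀ = k ∧ μ ω₀ ≠ 0
  · obtain ⟨ω₀, rfl, h₀⟩ := hk
    exact h ω₀ h₀
  · push Not at hk
    have hnull (f : Ω → ℝ) : ex μ (fun ω => if κ ω = k then f ω else 0) = 0 :=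
      sum_eq_zero fun ω _ => by by_cases hω : κ ω = k <;> simp [hω, hk ω]
    rw [hnull, hnull]

theorem ex_eq_ex_ite_div_cpr (hμ : ∀ ω, 0 ≤ μ ω) {β ξ : Type} (E : Ω → Prop) (H : Ω → β)
    (X : Ω → ξ)
    (hind : ∀ ω₀, 0 < μ ω₀ →
      cpr μ (fun ω => E ω ∧ X ω = X ω₀) (fun ω => H ω = H ω₀) =
        cpr μ E (fun ω => H ω = H ω₀) * cpr μ (fun ω => X ω = X ω₀) (fun ω => H ω = H ω₀))
    (hpos : ∀ ω₀, 0 < μ ω₀ → 0 < cpr μ E (fun ω => H ω = H ω₀))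
    {φ : Ω → ℝ} (hφ : ∀ ω ω', H ω = H ω' → X ω = X ω' → φ ω = φ ω') :
    ex μ φ = ex μ (fun ω => if E ω then φ ω / cpr μ E (fun ω' => H ω' = H ω) else 0) := by
  refine ex_eq_ex_of_fiberwise μ (fun ω => (H ω, X ω)) fun ω₀ h₀ => ?_
  replace h₀ : 0 < μ ω₀ := (hμ ω₀).lt_of_ne' h₀
  have hc := (hpos ω₀ h₀).ne'
  have hpr := pr_and_eq_cpr_mul_pr μ
    (pr_pos_of_pos μ hμ (E := fun ω => H ω = H ω₀) rfl h₀).ne' (hind ω₀ h₀)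
  rw [ex_ite_eq_mul_pr μ (G := fun _ => True) (c := φ ω₀),
    ex_ite_eq_mul_pr μ (G := E) (c := φ ω₀ / cpr μ E (fun ω => H ω = H ω₀))]
  · have hfiber (G : Ω → Prop) (ω : Ω) :
        ((H ω, X ω) = (H ω₀, X ω₀) ∧ G ω) ↔ (G ω ∧ X ω = X ω₀) ∧ H ω = H ω₀ := by
      rw [Prod.mk.injEq]; tauto
    rw [pr_congr μ (hfiber _), pr_congr μ (hfiber _), hpr]
    simp only [true_and]
    field_simp
  · intro ω hω
    obtain ⟨hH, hX⟩ := Prod.mk.inj hω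
    simp only [hH, hφ ω ω₀ hH hX]
  · intro ω hω
    obtain ⟨hH, hX⟩ := Prod.mk.inj hω
    simp only [hφ ω ω₀ hH hX, if_true]

end FiniteProbability

section History

variable {Ω 𝒜 ℒ : Type} (A : ℕ → Ω → 𝒜) (L : ℕ → Ω → ℒ)

-- `(Ā(j-1), L̄(j))` as a single value, so that conditioning on it is conditioning on a level set.
def history (j : ℕ) (ω : Ω) : (Fin j → 𝒜) × (Fin (j + 1) → ℒ) :=
  (fun i => A i ω, fun i => L i ω)

variable {A L} in
lemma history_eq_history_iff {j : ℕ} {ω ω' : Ω} :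
    history A L j ω = history A L j ω' ↔ (∀ i < j, A i ω = A i ω') ∧ (∀ i ≤ j, L i ω = L i ω') := by
  simp only [history, Prod.mk.injEq, funext_iff, Fin.forall_iff, Nat.lt_succ_iff]

variable {A L} in
lemma history_eq_history_of_le {i j : ℕ} (hij : i ≤ j) {ω ω' : Ω}
    (h : history A L j ω = history A L j ω') : history A L i ω = history A L i ω' := by
  rw [history_eq_history_iff] at h ⊢
  exact ⟨fun k hk => h.1 k (hk.trans_le hij), fun k hk => h.2 k (hk.trans hij)⟩

variable {A L} in
lemma eq_counterfactual_of_agree (CL : (ℕ → 𝒜) → ℕ → Ω → ℒ)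
    (hTO : ∀ (a a' : ℕ → 𝒜) (j : ℕ), (∀ i < j, a i = a' i) → ∀ ω, CL a j ω = CL a' j ω)
    (hcons : ∀ j ω, L j ω = CL (fun i => A i ω) j ω) {a : ℕ → 𝒜} {j : ℕ} {ω : Ω}
    (h : ∀ i < j, A i ω = a i) : L j ω = CL a j ω :=
  (hcons j ω).trans (hTO _ _ j h ω)

end History

section Propensity

variable {Ω 𝒜 ℒ : Type} [Fintype Ω] (μ : Ω → ℝ) (A : ℕ → Ω → 𝒜) (L : ℕ → Ω → ℒ)

-- `g(A(j) = a | Ā(j-1), L̄(j))` at the history of `ω`.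
def propensity (j : ℕ) (a : 𝒜) (ω : Ω) : ℝ :=
  cpr μ (fun ω' => A j ω' = a) (fun ω' => (∀ i < j, A i ω' = A i ω) ∧ (∀ i ≤ j, L i ω' = L i ω))

lemma propensity_eq_cpr_history (j : ℕ) (a : 𝒜) (ω : Ω) :
    propensity μ A L j a ω =
      cpr μ (fun ω' => A j ω' = a) (fun ω' => history A L j ω' = history A L j ω) :=
  cpr_congr μ (fun _ => Iff.rfl) fun _ => history_eq_history_iff.symm

-- SRA at time `j`: `A(j) ⟂ (L_ā(k))_{ā,k} | (Ā(j-1), L̄(j))`.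
def IgnorableAt (CL : (ℕ → 𝒜) → ℕ → Ω → ℒ) (j : ℕ) : Prop :=
  ∀ (a : 𝒜) (x : (ℕ → 𝒜) → ℕ → ℒ) (ab : ℕ → 𝒜) (lb : ℕ → ℒ),
      pr μ (fun ω => (∀ i < j, A i ω = ab i) ∧ (∀ i ≤ j, L i ω = lb i)) > 0 →
      cpr μ (fun ω => A j ω = a ∧ ∀ (ar : ℕ → 𝒜) (jj : ℕ), CL ar jj ω = x ar jj)
        (fun ω => (∀ i < j, A i ω = ab i) ∧ (∀ i ≤ j, L i ω = lb i)) =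
      cpr μ (fun ω => A j ω = a)
        (fun ω => (∀ i < j, A i ω = ab i) ∧ (∀ i ≤ j, L i ω = lb i)) *
      cpr μ (fun ω => ∀ (ar : ℕ → 𝒜) (jj : ℕ), CL ar jj ω = x ar jj)
        (fun ω => (∀ i < j, A i ω = ab i) ∧ (∀ i ≤ j, L i ω = lb i))

variable {μ A L} in
lemma IgnorableAt.cpr_history {CL : (ℕ → 𝒜) → ℕ → Ω → ℒ} {j : ℕ} (h : IgnorableAt μ A L CL j)
    (hμ : ∀ ω, 0 ≤ μ ω) (a : 𝒜) {ω₀ : Ω} (h₀ : 0 < μ ω₀) :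
    cpr μ (fun ω => A j ω = a ∧ (fun b k => CL b k ω) = (fun b k => CL b k ω₀))
        (fun ω => history A L j ω = history A L j ω₀) =
      cpr μ (fun ω => A j ω = a) (fun ω => history A L j ω = history A L j ω₀) *
        cpr μ (fun ω => (fun b k => CL b k ω) = (fun b k => CL b k ω₀))
          (fun ω => history A L j ω = history A L j ω₀) := by
  have hH (ω : Ω) := history_eq_history_iff (A := A) (L := L) (j := j) (ω := ω) (ω' := ω₀)
  have hX (ω : Ω) :
      (fun b k => CL b k ω) = (fun b k => CL b k ω₀) ↔ ∀ b k, CL b k ω = CL b k ω₀ := by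
    simp only [funext_iff]
  rw [cpr_congr μ (fun ω => and_congr_right' (hX ω)) hH, cpr_congr μ (fun _ => Iff.rfl) hH,
    cpr_congr μ hX hH]
  exact h a _ _ _ (pr_pos_of_pos μ hμ ⟨fun _ _ => rfl, fun _ _ => rfl⟩ h₀)

def ipwWeight (ab : ℕ → 𝒜) (m j : ℕ) (ω : Ω) : ℝ :=
  (if ∀ i, m ≤ i → i < j → A i ω = ab i then 1 else 0) /
    ∏ i ∈ Ico m j, propensity μ A L i (A i ω) ω

lemma ipwWeight_self (ab : ℕ → 𝒜) (m : ℕ) (ω : Ω) : ipwWeight μ A L ab m m ω = 1 := by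
  simp +contextual [ipwWeight, not_lt_of_ge]

lemma ipwWeight_succ (ab : ℕ → 𝒜) {m j : ℕ} (hmj : m ≤ j) (ω : Ω) :
    ipwWeight μ A L ab m (j + 1) ω =
      if A j ω = ab j then ipwWeight μ A L ab m j ω / propensity μ A L j (ab j) ω else 0 := by
  rw [ipwWeight, ipwWeight, prod_Ico_succ_top hmj, div_mul_eq_div_div]
  by_cases hj : A j ω = ab j
  · have hlt : (∀ i, m ≤ i → i < j + 1 → A i ω = ab i) ↔ (∀ i, m ≤ i → i < j → A i ω = ab i) :=
      ⟨fun h i hm hi => h i hm (by omega), fun h i hm hi =>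
        (Nat.lt_succ_iff_lt_or_eq.mp hi).elim (h i hm) fun hij => hij ▸ hj⟩
    rw [if_pos hj, if_congr hlt rfl rfl, hj]
  · rw [if_neg hj, if_neg fun h => hj (h j hmj j.lt_succ_self), zero_div, zero_div]

variable {A L} in
lemma ipwWeight_congr (ab : ℕ → 𝒜) (m : ℕ) {j : ℕ} {ω ω' : Ω}
    (h : history A L j ω = history A L j ω') :
    ipwWeight μ A L ab m j ω = ipwWeight μ A L ab m j ω' := by
  have hA := (history_eq_history_iff.mp h).1
  have hind : (∀ i, m ≤ i → i < j → A i ω = ab i) ↔ (∀ i, m ≤ i → i < j → A i ω' = ab i) :=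
    forall_congr' fun i => imp_congr_right fun _ => imp_congr_right fun hi => by rw [hA i hi]
  have hprod : ∀ i ∈ Ico m j, propensity μ A L i (A i ω) ω = propensity μ A L i (A i ω') ω' := by
    intro i hi
    have hij := (mem_Ico.mp hi).2
    rw [propensity_eq_cpr_history, propensity_eq_cpr_history, hA i hij,
      history_eq_history_of_le hij.le h]
  rw [ipwWeight, ipwWeight, if_congr hind rfl rfl, prod_congr rfl hprod]

end Propensity

section Identification

variable {Ω 𝒜 ℒ : Type} [Fintype Ω] {μ : Ω → ℝ} {A : ℕ → Ω → 𝒜} {L : ℕ → Ω → ℒ}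
  {CL : (ℕ → 𝒜) → ℕ → Ω → ℒ}

theorem ex_mul_ipwWeight_succ (hμ : ∀ ω, 0 ≤ μ ω) (ab : ℕ → 𝒜) {m j : ℕ} (hmj : m ≤ j)
    (hSRA : IgnorableAt μ A L CL j) (hpos : ∀ ω, 0 < μ ω → 0 < propensity μ A L j (ab j) ω)
    {f : Ω → ℝ} (hf : ∀ ω ω', history A L j ω = history A L j ω' →
      (fun a k => CL a k ω) = (fun a k => CL a k ω') → f ω = f ω') :
    ex μ (fun ω => f ω * ipwWeight μ A L ab m j ω) =
      ex μ (fun ω => f ω * ipwWeight μ A L ab m (j + 1) ω) := by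
  rw [ex_eq_ex_ite_div_cpr μ hμ (fun ω => A j ω = ab j) (history A L j) (fun ω a k => CL a k ω)
    (fun ω₀ h₀ => hSRA.cpr_history hμ (ab j) h₀)
    (fun ω₀ h₀ => propensity_eq_cpr_history μ A L j (ab j) ω₀ ▸ hpos ω₀ h₀)
    (fun ω ω' hH hX => by rw [hf ω ω' hH hX, ipwWeight_congr μ ab m hH])]
  congr 1
  funext ω
  rw [ipwWeight_succ μ A L ab hmj, ← propensity_eq_cpr_history]
  split_ifs <;> ring

theorem ex_eq_ex_mul_ipwWeight (hμ : ∀ ω, 0 ≤ μ ω) (ab : ℕ → 𝒜) {m n : ℕ} (hmn : m ≤ n)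
    (hSRA : ∀ j, m ≤ j → j < n → IgnorableAt μ A L CL j)
    (hpos : ∀ j, m ≤ j → j < n → ∀ ω, 0 < μ ω → 0 < propensity μ A L j (ab j) ω)
    {f : Ω → ℝ} (hf : ∀ ω ω', history A L m ω = history A L m ω' →
      (fun a k => CL a k ω) = (fun a k => CL a k ω') → f ω = f ω') :
    ex μ f = ex μ (fun ω => f ω * ipwWeight μ A L ab m n ω) := by
  induction n, hmn using Nat.le_induction with
  | base => simp only [ipwWeight_self, mul_one]
  | succ n hmn ih =>
    rw [ih (fun j hm hj => hSRA j hm (by omega)) (fun j hm hj => hpos j hm (by omega)),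
      ex_mul_ipwWeight_succ hμ ab hmn (hSRA n hmn n.lt_succ_self) (hpos n hmn n.lt_succ_self)
        fun ω ω' hH => hf ω ω' (history_eq_history_of_le hmn hH)]

end Identification

theorem hrmsm_conditional_identifiability_general
    {Ω 𝒜 ℒ 𝒱 : Type} [Fintype Ω]
    (μ : Ω → ℝ) (hμ : ∀ ω, 0 ≤ μ ω)
    (K s : ℕ)
    (A : ℕ → Ω → 𝒜) (CL : (ℕ → 𝒜) → ℕ → Ω → ℒ) (L : ℕ → Ω → ℒ) (Y : ℒ → ℝ)
    (hTO : ∀ (a a' : ℕ → 𝒜) (j : ℕ), (∀ i < j, a i = a' i) → ∀ ω, CL a j ω = CL a' j ω)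
    (hcons : ∀ j ω, L j ω = CL (fun i => A i ω) j ω)
    (SRA : ∀ j ≤ K, ∀ (a : 𝒜) (x : (ℕ → 𝒜) → ℕ → ℒ) (ab : ℕ → 𝒜) (lb : ℕ → ℒ),
      pr μ (fun ω => (∀ i < j, A i ω = ab i) ∧ (∀ i ≤ j, L i ω = lb i)) > 0 →
      cpr μ (fun ω => A j ω = a ∧ ∀ (ar : ℕ → 𝒜) (jj : ℕ), CL ar jj ω = x ar jj)
        (fun ω => (∀ i < j, A i ω = ab i) ∧ (∀ i ≤ j, L i ω = lb i)) =
      cpr μ (fun ω => A j ω = a)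
        (fun ω => (∀ i < j, A i ω = ab i) ∧ (∀ i ≤ j, L i ω = lb i)) *
      cpr μ (fun ω => ∀ (ar : ℕ → 𝒜) (jj : ℕ), CL ar jj ω = x ar jj)
        (fun ω => (∀ i < j, A i ω = ab i) ∧ (∀ i ≤ j, L i ω = lb i)))
    (t : ℕ) (ht2 : t ≤ K) (ab : ℕ → 𝒜)
    (POS : ∀ j, t + 1 - s ≤ j → j ≤ t → ∀ (a : 𝒜) (ω : Ω), μ ω > 0 →
      cpr μ (fun ω' => A j ω' = a)
        (fun ω' => (∀ i < j, A i ω' = A i ω) ∧ (∀ i ≤ j, L i ω' = L i ω)) > 0)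
    (V : Ω → 𝒱)
    (hV : ∀ ω ω', (∀ i < t + 1 - s, A i ω = A i ω') →
      (∀ i ≤ t + 1 - s, L i ω = L i ω') → V ω = V ω')
    (v : 𝒱) :
    cex μ (fun ω => Y (CL (fun i => if i < t + 1 - s then A i ω else ab i) (t + 1) ω))
      (fun ω => V ω = v) =
    cex μ (fun ω =>
      (if ∀ j, t + 1 - s ≤ j → j ≤ t → A j ω = ab j then (1 : ℝ) else 0) *
      Y (L (t + 1) ω) /
      ∏ j ∈ Finset.Ico (t + 1 - s) (t + 1),
        cpr μ (fun ω' => A j ω' = A j ω)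
          (fun ω' => (∀ i < j, A i ω' = A i ω) ∧ (∀ i ≤ j, L i ω' = L i ω)))
      (fun ω => V ω = v) := by
  set m := t + 1 - s
  have hf (ω ω' : Ω) (hH : history A L m ω = history A L m ω')
      (hX : (fun a k => CL a k ω) = (fun a k => CL a k ω')) :
      (if V ω = v then Y (CL (fun i => if i < m then A i ω else ab i) (t + 1) ω) else 0) =
        if V ω' = v then Y (CL (fun i => if i < m then A i ω' else ab i) (t + 1) ω') else 0 := by
    obtain ⟨hA, hL⟩ := history_eq_history_iff.mp hH
    have hregime : (fun i => if i < m then A i ω else ab i) =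
        (fun i => if i < m then A i ω' else ab i) := by
      funext i
      split_ifs with hi
      · exact hA i hi
      · rfl
    rw [hV ω ω' hA hL, hregime, congrFun₂ hX]
  rw [cex_eq_ex_div, cex_eq_ex_div, ex_eq_ex_mul_ipwWeight hμ ab (n := t + 1) (by omega)
    (fun j _ hj => SRA j (by omega)) (fun j hm hj => POS j hm (by omega) (ab j)) hf]
  congr 2
  funext ω
  simp only [ipwWeight, Nat.lt_succ_iff, ite_mul, zero_mul]
  split_ifs with hVv hfollow
  · rw [← eq_counterfactual_of_agree CL hTO hcons fun i hi => ?_]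
    · simp only [propensity]; ring
    · split_ifs with him
      · rfl
      · exact hfollow i (by omega) (by omega)
  · simp
  · rfl

/-- conditional-on-baseline identifiability: the baseline-conditional
mean of the history-restricted counterfactual outcome equals the conditional mean
of the IPTW-transformed observed outcome. -/
theorem hrmsm_conditional_identifiability
    {Ω 𝒜 ℒ 𝒱 : Type} [Fintype Ω]
    (μ : Ω → ℝ) (hμ : ∀ ω, 0 ≤ μ ω) (hsum : ∑ ω, μ ω = 1)
    (K s : ℕ) (hs : 1 ≤ s) (hsK : s ≤ K + 1)
    (A : ℕ → Ω → 𝒜) (CL : (ℕ → 𝒜) → ℕ → Ω → ℒ) (L : ℕ → Ω → ℒ) (Y : ℒ → ℝ)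
    (hTO : ∀ (a a' : ℕ → 𝒜) (j : ℕ), (∀ i < j, a i = a' i) → ∀ ω, CL a j ω = CL a' j ω)
    (hcons : ∀ j ω, L j ω = CL (fun i => A i ω) j ω)
    (SRA : ∀ j ≤ K, ∀ (a : 𝒜) (x : (ℕ → 𝒜) → ℕ → ℒ) (ab : ℕ → 𝒜) (lb : ℕ → ℒ),
      pr μ (fun ω => (∀ i < j, A i ω = ab i) ∧ (∀ i ≤ j, L i ω = lb i)) > 0 →
      cpr μ (fun ω => A j ω = a ∧ ∀ (ar : ℕ → 𝒜) (jj : ℕ), CL ar jj ω = x ar jj)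
        (fun ω => (∀ i < j, A i ω = ab i) ∧ (∀ i ≤ j, L i ω = lb i)) =
      cpr μ (fun ω => A j ω = a)
        (fun ω => (∀ i < j, A i ω = ab i) ∧ (∀ i ≤ j, L i ω = lb i)) *
      cpr μ (fun ω => ∀ (ar : ℕ → 𝒜) (jj : ℕ), CL ar jj ω = x ar jj)
        (fun ω => (∀ i < j, A i ω = ab i) ∧ (∀ i ≤ j, L i ω = lb i)))
    (t : ℕ) (ht1 : s - 1 ≤ t) (ht2 : t ≤ K) (ab : ℕ → 𝒜)
    (POS : ∀ j, t + 1 - s ≤ j → j ≤ t → ∀ (a : 𝒜) (ω : Ω), μ ω > 0 →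
      cpr μ (fun ω' => A j ω' = a)
        (fun ω' => (∀ i < j, A i ω' = A i ω) ∧ (∀ i ≤ j, L i ω' = L i ω)) > 0)
    (V : Ω → 𝒱)
    (hV : ∀ ω ω', (∀ i < t + 1 - s, A i ω = A i ω') →
      (∀ i ≤ t + 1 - s, L i ω = L i ω') → V ω = V ω')
    (v : 𝒱) (hv : pr μ (fun ω => V ω = v) > 0) :
    cex μ (fun ω => Y (CL (fun i => if i < t + 1 - s then A i ω else ab i) (t + 1) ω))
      (fun ω => V ω = v) =
    cex μ (fun ω =>
      (if ∀ j, t + 1 - s ≤ j → j ≤ t → A j ω = ab j then (1 : ℝ) else 0) *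
      Y (L (t + 1) ω) /
      ∏ j ∈ Finset.Ico (t + 1 - s) (t + 1),
        cpr μ (fun ω' => A j ω' = A j ω)
          (fun ω' => (∀ i < j, A i ω' = A i ω) ∧ (∀ i ≤ j, L i ω' = L i ω)))
      (fun ω => V ω = v) :=
  hrmsm_conditional_identifiability_general μ hμ K s A CL L Y hTO hcons SRA t ht2 ab POS V hV v

end
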